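/- arXiv:1102.4080 — 2 statements merged into one kernel-verified Lean document; each statement's English description precedes it below -/
import Mathlib

section
/- Let X_1, …, X_n be independent random vectors in ℝ^d where each X_k is distributed according to a probabilistic tight frame μ_k with finite 4-th moment N_k = ∫‖y‖⁴ dμ_k(y). Then E‖(1/n)∑_{k=1}^n X_k X_k^T − (L/d)·I_d‖_F² = (1/n)(N − L̃/d), where L_k = ∫‖y‖² dμ_k(y), L = (1/n)∑_k L_k, L̃ = (1/n)∑_k L_k², and N = (1/n)∑_k N_k, and ‖·‖_F is the Frobenius norm. -/
open MeasureTheory ProbabilityTheory RealInnerProductSpace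

/-!
By polarization, the tight-frame identity `∫ ⟪x, y⟫² dμₖ = A ‖x‖²` says that the second-moment
matrix of `μₖ` is `A • I`, and taking traces gives `A = Lₖ / d`. Hence the `(i, j)` entry of
`(1/n) ∑ₖ Xₖ Xₖᵀ - (L/d) I` is the centred average of the independent variables `Xₖᵢ Xₖⱼ`, and its
mean square is `n⁻² ∑ₖ Var(Xₖᵢ Xₖⱼ)`. Summed over `i, j`, the variances of the entries of `y yᵀ`
under `μₖ` add up to `∫ ‖y‖⁴ dμₖ - ‖A • I‖_F² = Nₖ - Lₖ² / d`.
-/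

section TightFrame

variable {E : Type*} [NormedAddCommGroup E] [InnerProductSpace ℝ E] [MeasurableSpace E]
  [OpensMeasurableSpace E] {ν : Measure E}

lemma integrable_inner_sq_of_integrable_norm_sq (h2 : Integrable (fun y => ‖y‖ ^ 2) ν) (x : E) :
    Integrable (fun y => ⟪x, y⟫ ^ 2) ν := by
  refine (h2.const_mul (‖x‖ ^ 2)).mono (by fun_prop) (ae_of_all _ fun y => ?_)
  rw [Real.norm_of_nonneg (sq_nonneg _), Real.norm_of_nonneg (by positivity), ← mul_pow, ← sq_abs]
  gcongr
  exact abs_real_inner_le_norm x y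

lemma integral_inner_mul_inner_of_tight {A : ℝ} (hA : ∀ x : E, ∫ y, ⟪x, y⟫ ^ 2 ∂ν = A * ‖x‖ ^ 2)
    (h2 : Integrable (fun y => ‖y‖ ^ 2) ν) (x x' : E) :
    ∫ y, ⟪x, y⟫ * ⟪x', y⟫ ∂ν = A * ⟪x, x'⟫ := by
  have hpol : ∀ y, ⟪x, y⟫ * ⟪x', y⟫ = (⟪x + x', y⟫ ^ 2 - ⟪x - x', y⟫ ^ 2) / 4 := fun y => by
    rw [inner_add_left, inner_sub_left]; ring
  simp_rw [hpol]
  rw [integral_div, integral_sub (integrable_inner_sq_of_integrable_norm_sq h2 _)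
    (integrable_inner_sq_of_integrable_norm_sq h2 _), hA, hA, norm_add_sq_real, norm_sub_sq_real]
  ring

end TightFrame

section Euclidean

variable {ι : Type*} [Fintype ι] {ν : Measure (EuclideanSpace ℝ ι)}

lemma integral_apply_mul_apply_of_tight [DecidableEq ι] {A : ℝ}
    (hA : ∀ x : EuclideanSpace ℝ ι, ∫ y, ⟪x, y⟫ ^ 2 ∂ν = A * ‖x‖ ^ 2)
    (h2 : Integrable (fun y => ‖y‖ ^ 2) ν) (i j : ι) :
    ∫ y, y i * y j ∂ν = if i = j then (∫ y, ‖y‖ ^ 2 ∂ν) / Fintype.card ι else 0 := by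
  have hcov : ∀ i j : ι, ∫ y, y i * y j ∂ν = if i = j then A else 0 := fun i j => by
    simpa [EuclideanSpace.inner_single_left, PiLp.single_apply, eq_comm] using
      integral_inner_mul_inner_of_tight hA h2 (EuclideanSpace.single i 1)
        (EuclideanSpace.single j 1)
  have htrace : ∫ y, ‖y‖ ^ 2 ∂ν = Fintype.card ι * A := by
    have hsq : ∀ i, Integrable (fun y : EuclideanSpace ℝ ι => y i ^ 2) ν := fun i => by
      simpa [EuclideanSpace.inner_single_left] using
        integrable_inner_sq_of_integrable_norm_sq h2 (EuclideanSpace.single i 1)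
    simp_rw [EuclideanSpace.real_norm_sq_eq]
    rw [integral_finsetSum _ fun i _ => hsq i]
    simp [sq, hcov]
  rw [hcov]
  split_ifs with hij
  · subst hij
    have : (Fintype.card ι : ℝ) ≠ 0 := Nat.cast_ne_zero.2 (Fintype.card_pos_iff.2 ⟨i⟩).ne'
    rw [htrace]
    field_simp
  · rfl

lemma memLp_apply_mul_apply (h4 : Integrable (fun y => ‖y‖ ^ 4) ν) (i j : ι) :
    MemLp (fun y : EuclideanSpace ℝ ι => y i * y j) 2 ν := by
  refine (memLp_two_iff_integrable_sq (by fun_prop)).2 <| h4.mono (by fun_prop) <|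
    ae_of_all _ fun y => ?_
  rw [Real.norm_of_nonneg (sq_nonneg _), Real.norm_of_nonneg (by positivity),
    show ‖y‖ ^ 4 = (‖y‖ * ‖y‖) ^ 2 by ring, ← sq_abs, abs_mul]
  have hcoord : ∀ i, |y i| ≤ ‖y‖ := fun i => (Real.norm_eq_abs _).symm.trans_le (y.norm_apply_le i)
  gcongr <;> apply hcoord

lemma sum_variance_apply_mul_apply [IsProbabilityMeasure ν]
    (h4 : Integrable (fun y => ‖y‖ ^ 4) ν) :
    ∑ i, ∑ j, Var[fun y : EuclideanSpace ℝ ι => y i * y j; ν] =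
      ∫ y, ‖y‖ ^ 4 ∂ν - ∑ i, ∑ j, (∫ y, y i * y j ∂ν) ^ 2 := by
  have hfrob : ∀ y : EuclideanSpace ℝ ι, ‖y‖ ^ 4 = ∑ i, ∑ j, (y i * y j) ^ 2 := fun y => by
    simp_rw [mul_pow, ← Finset.sum_mul_sum, ← EuclideanSpace.real_norm_sq_eq]
    ring
  have hint : ∀ i j, Integrable (fun y : EuclideanSpace ℝ ι => (y i * y j) ^ 2) ν :=
    fun i j => (memLp_apply_mul_apply h4 i j).integrable_sq
  simp_rw [variance_eq_sub (memLp_apply_mul_apply h4 _ _), Finset.sum_sub_distrib, hfrob]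
  rw [integral_finsetSum _ fun i _ => integrable_finsetSum _ fun j _ => hint i j]
  simp_rw [integral_finsetSum _ fun j _ => hint _ j]
  rfl

lemma sum_variance_apply_mul_apply_of_tight [IsProbabilityMeasure ν] {A : ℝ}
    (hA : ∀ x : EuclideanSpace ℝ ι, ∫ y, ⟪x, y⟫ ^ 2 ∂ν = A * ‖x‖ ^ 2)
    (h4 : Integrable (fun y => ‖y‖ ^ 4) ν) :
    ∑ i, ∑ j, Var[fun y : EuclideanSpace ℝ ι => y i * y j; ν] =
      ∫ y, ‖y‖ ^ 4 ∂ν - (∫ y, ‖y‖ ^ 2 ∂ν) ^ 2 / Fintype.card ι := by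
  classical
  have h2 : Integrable (fun y => ‖y‖ ^ 2) ν :=
    integrable_norm_pow_of_le (f := id) aestronglyMeasurable_id (by norm_num) h4
  simp_rw [sum_variance_apply_mul_apply h4, integral_apply_mul_apply_of_tight hA h2]
  simp only [ite_pow, ne_eq, OfNat.ofNat_ne_zero, not_false_eq_true, zero_pow, Finset.sum_ite_eq,
    Finset.mem_univ, ↓reduceIte, Finset.sum_const, Finset.card_univ, nsmul_eq_mul, sub_right_inj]
  obtain hc | hc := eq_or_ne (Fintype.card ι : ℝ) 0
  · simp [hc]
  · field_simp

end Euclidean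

section Independent

variable {Ω : Type*} [MeasurableSpace Ω] {P : Measure Ω}

lemma variance_sum_comp_of_iIndepFun {ι E : Type*} [Fintype ι] [MeasurableSpace E]
    {X : ι → Ω → E} {ν : ι → Measure E} (hX : ∀ k, Measurable (X k)) (hind : iIndepFun X P)
    (hlaw : ∀ k, P.map (X k) = ν k) {f : E → ℝ} (hf : Measurable f) (hf2 : ∀ k, MemLp f 2 (ν k)) :
    Var[fun ω => ∑ k, f (X k ω); P] = ∑ k, Var[f; ν k] := by
  have hcomp : ∀ k, MemLp (f ∘ X k) 2 P := fun k =>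
    ((hlaw k).symm ▸ hf2 k).comp_of_map (hX k).aemeasurable
  simp only [← hlaw, variance_map hf.aemeasurable (hX _).aemeasurable, ← IndepFun.variance_sum
    (s := Finset.univ) (fun k _ => hcomp k) fun k _ l _ hkl => (hind.indepFun hkl).comp hf hf]
  congr with ω
  simp

lemma integral_sum_sum_sq_sub_integral [IsFiniteMeasure P] {κ κ' : Type*} [Fintype κ] [Fintype κ']
    {S : κ → κ' → Ω → ℝ} (hS : ∀ i j, MemLp (S i j) 2 P) :
    ∫ ω, ∑ i, ∑ j, (S i j ω - P[S i j]) ^ 2 ∂P = ∑ i, ∑ j, Var[S i j; P] := by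
  have hsq : ∀ i j, Integrable (fun ω => (S i j ω - P[S i j]) ^ 2) P := fun i j =>
    ((hS i j).sub (memLp_const _)).integrable_sq
  rw [integral_finsetSum _ fun i _ => integrable_finsetSum _ fun j _ => hsq i j]
  simp_rw [integral_finsetSum _ fun j _ => hsq _ j, variance_eq_integral (hS _ _).aemeasurable]

end Independent

theorem stmt_8_general {d n : ℕ}
    {Ω : Type*} [MeasurableSpace Ω] (P : Measure Ω) [IsProbabilityMeasure P]
    (μ : Fin n → Measure (EuclideanSpace ℝ (Fin d)))
    [∀ k, IsProbabilityMeasure (μ k)]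
    (X : Fin n → Ω → EuclideanSpace ℝ (Fin d))
    (hmeas : ∀ k, Measurable (X k))
    (hindep : iIndepFun X P)
    (hlaw : ∀ k, Measure.map (X k) P = μ k)
    (htight : ∀ k, ∃ A : ℝ, 0 < A ∧
      ∀ x : EuclideanSpace ℝ (Fin d), (∫ y, ⟪x, y⟫ ^ 2 ∂μ k) = A * ‖x‖ ^ 2)
    (hmom : ∀ k, Integrable (fun y : EuclideanSpace ℝ (Fin d) => ‖y‖ ^ 4) (μ k)) :
    (∫ ω, ∑ i, ∑ j,
        (((n : ℝ)⁻¹ * ∑ k, X k ω i * X k ω j) -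
          (if i = j then ((n : ℝ)⁻¹ * ∑ k, ∫ y, ‖y‖ ^ 2 ∂μ k) / d else 0)) ^ 2 ∂P) =
      (n : ℝ)⁻¹ * (((n : ℝ)⁻¹ * ∑ k, ∫ y, ‖y‖ ^ 4 ∂μ k) -
        ((n : ℝ)⁻¹ * ∑ k, (∫ y, ‖y‖ ^ 2 ∂μ k) ^ 2) / d) := by
  choose A _ hA using htight
  have h2 : ∀ k, Integrable (fun y : EuclideanSpace ℝ (Fin d) => ‖y‖ ^ 2) (μ k) := fun k =>
    integrable_norm_pow_of_le (f := id) aestronglyMeasurable_id (by norm_num) (hmom k)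
  set S : Fin d → Fin d → Ω → ℝ := fun i j ω => (n : ℝ)⁻¹ * ∑ k, X k ω i * X k ω j
  have hmemLp : ∀ k i j, MemLp (fun ω => X k ω i * X k ω j) 2 P := fun k i j =>
    ((hlaw k).symm ▸ memLp_apply_mul_apply (hmom k) i j).comp_of_map (hmeas k).aemeasurable
  have hS : ∀ i j, MemLp (S i j) 2 P := fun i j =>
    (memLp_finsetSum _ fun k _ => hmemLp k i j).const_mul _
  have hmean : ∀ i j, P[S i j] =
      if i = j then ((n : ℝ)⁻¹ * ∑ k, ∫ y, ‖y‖ ^ 2 ∂μ k) / d else 0 := by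
    intro i j
    have hk : ∀ k, ∫ ω, X k ω i * X k ω j ∂P = ∫ y, y i * y j ∂μ k := fun k => by
      rw [← hlaw k, integral_map (hmeas k).aemeasurable (by fun_prop)]
    simp only [S, integral_const_mul, hk, Fintype.card_fin,
      integral_finsetSum _ fun k _ => (hmemLp k i j).integrable one_le_two,
      integral_apply_mul_apply_of_tight (hA _) (h2 _)]
    split_ifs <;> simp [Finset.sum_div, Finset.mul_sum, mul_div_assoc]
  have hvar : ∀ i j, Var[S i j; P] = (n : ℝ)⁻¹ ^ 2 * ∑ k, Var[fun y => y i * y j; μ k] := by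
    intro i j
    rw [variance_const_mul, variance_sum_comp_of_iIndepFun (f := fun y => y i * y j) hmeas hindep
      hlaw (by fun_prop) fun k => memLp_apply_mul_apply (hmom k) i j]
  calc _ = ∫ ω, ∑ i, ∑ j, (S i j ω - P[S i j]) ^ 2 ∂P := by simp_rw [hmean]; rfl
    _ = ∑ i, ∑ j, Var[S i j; P] := integral_sum_sum_sq_sub_integral hS
    _ = (n : ℝ)⁻¹ ^ 2 * ∑ k, ∑ i, ∑ j, Var[fun y => y i * y j; μ k] := by
        simp_rw [hvar, ← Finset.mul_sum]
        exact congrArg _ ((Finset.sum_congr rfl fun i _ => Finset.sum_comm).trans Finset.sum_comm)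
    _ = _ := by
        simp_rw [sum_variance_apply_mul_apply_of_tight (hA _) (hmom _), Fintype.card_fin]
        rw [Finset.sum_sub_distrib, ← Finset.sum_div]
        ring

/-- Random vectors independently distributed according to probabilistic tight frames with
finite fourth moments: mean squared distance of the scaled frame operator to `(L/d)·I_d`. -/
theorem stmt_8 {d n : ℕ} (hd : 0 < d) (hn : 0 < n)
    {Ω : Type*} [MeasurableSpace Ω] (P : Measure Ω) [IsProbabilityMeasure P]
    (μ : Fin n → Measure (EuclideanSpace ℝ (Fin d)))
    [∀ k, IsProbabilityMeasure (μ k)]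
    (X : Fin n → Ω → EuclideanSpace ℝ (Fin d))
    (hmeas : ∀ k, Measurable (X k))
    (hindep : iIndepFun X P)
    (hlaw : ∀ k, Measure.map (X k) P = μ k)
    (htight : ∀ k, ∃ A : ℝ, 0 < A ∧
      ∀ x : EuclideanSpace ℝ (Fin d), (∫ y, ⟪x, y⟫ ^ 2 ∂μ k) = A * ‖x‖ ^ 2)
    (hmom : ∀ k, Integrable (fun y : EuclideanSpace ℝ (Fin d) => ‖y‖ ^ 4) (μ k)) :
    (∫ ω, ∑ i, ∑ j,
        (((n : ℝ)⁻¹ * ∑ k, X k ω i * X k ω j) -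
          (if i = j then ((n : ℝ)⁻¹ * ∑ k, ∫ y, ‖y‖ ^ 2 ∂μ k) / d else 0)) ^ 2 ∂P) =
      (n : ℝ)⁻¹ * (((n : ℝ)⁻¹ * ∑ k, ∫ y, ‖y‖ ^ 4 ∂μ k) -
        ((n : ℝ)⁻¹ * ∑ k, (∫ y, ‖y‖ ^ 2 ∂μ k) ^ 2) / d) :=
  stmt_8_general P μ X hmeas hindep hlaw htight hmom
end

section
/- For any probability measure μ on K ⊆ ℝ^d with 0 ∉ K and finite second moments (and support not equal to {0}), the probabilistic frame potential PFP(μ) = (∫∫ |⟨x,y⟩|² dμ(x)dμ(y)) / (∫‖x‖² dμ(x))² satisfies PFP(μ) ≥ 1/d, with equality if and only if μ is a probabilistic tight frame for ℝ^d. -/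
/-!
Let `M` be the second-moment matrix `M i j = ∫ x i * x j ∂μ`. Expanding `⟪x, y⟫²` in coordinates
turns the numerator of the frame potential into `∑ i j, M i j ^ 2` and the denominator into
`(trace M)²`. The identity `‖M - (trace M / d) • 1‖² = ∑ i j, M i j ^ 2 - (trace M)² / d` for the
Frobenius norm gives the bound, with equality exactly when `M` is a multiple of the identity,
which is the tight frame condition.
-/

open MeasureTheory RealInnerProductSpace

namespace Matrix

variable {ι : Type*} [Fintype ι]

theorem sum_sq_sub_trace_div_smul_one [DecidableEq ι] (M : Matrix ι ι ℝ) :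
    ∑ i, ∑ j, (M - (M.trace / Fintype.card ι) • 1) i j ^ 2 =
      ∑ i, ∑ j, M i j ^ 2 - M.trace ^ 2 / Fintype.card ι := by
  rcases isEmpty_or_nonempty ι with hι | hι
  · simp
  set c := M.trace / Fintype.card ι
  have hc : M.trace = Fintype.card ι * c := by
    simp only [c]
    field_simp
  have expand : ∀ i j, (M - c • 1) i j ^ 2 =
      M i j ^ 2 - 2 * c * (if i = j then M i j else 0) + (if i = j then c ^ 2 else 0) := by
    intro i j
    by_cases h : i = j
    · subst h
      simp only [sub_apply, smul_apply, one_apply_eq, smul_eq_mul, mul_one, ↓reduceIte]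
      ring
    · simp [h]
  simp only [expand, Finset.sum_add_distrib, Finset.sum_sub_distrib, ← Finset.mul_sum,
    Finset.sum_ite_eq, Finset.mem_univ, if_true, Finset.sum_const, Finset.card_univ, nsmul_eq_mul]
  rw [show ∑ i, M i i = M.trace from rfl, hc]
  field_simp
  ring

theorem trace_sq_div_card_le_sum_sq (M : Matrix ι ι ℝ) :
    M.trace ^ 2 / Fintype.card ι ≤ ∑ i, ∑ j, M i j ^ 2 := by
  classical
  rw [← sub_nonneg, ← sum_sq_sub_trace_div_smul_one]
  positivity

theorem sum_sq_eq_trace_sq_div_card_iff [DecidableEq ι] (M : Matrix ι ι ℝ) :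
    ∑ i, ∑ j, M i j ^ 2 = M.trace ^ 2 / Fintype.card ι ↔
      M = (M.trace / Fintype.card ι) • 1 := by
  rw [← sub_eq_zero, ← sum_sq_sub_trace_div_smul_one, ← sub_eq_zero (a := M),
    Finset.sum_eq_zero_iff_of_nonneg (fun _ _ => by positivity)]
  simp only [Finset.sum_eq_zero_iff_of_nonneg (fun _ _ => sq_nonneg _), Finset.mem_univ,
    true_implies, sq_eq_zero_iff, ← Matrix.ext_iff, zero_apply]

end Matrix

theorem integral_norm_sq_pos {E : Type*} [NormedAddCommGroup E] [MeasurableSpace E]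
    {μ : Measure E} [NeZero μ] (hμ : Integrable (fun x => ‖x‖ ^ 2) μ) (h0 : μ {0} = 0) :
    0 < ∫ x, ‖x‖ ^ 2 ∂μ := by
  rw [integral_pos_iff_support_of_nonneg (fun _ => by positivity) hμ]
  have hsupp : Function.support (fun x : E => ‖x‖ ^ 2) = {0}ᶜ := by
    ext x
    simp
  rw [hsupp, pos_iff_ne_zero]
  intro h
  refine NeZero.ne μ (Measure.measure_univ_eq_zero.1 (nonpos_iff_eq_zero.1 ?_))
  calc μ Set.univ ≤ μ {0} + μ {0}ᶜ := measure_univ_le_add_compl _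
    _ = 0 := by rw [h0, h, add_zero]

section SecondMoment

variable {ι : Type*} [Fintype ι] {μ : Measure (EuclideanSpace ℝ ι)}

noncomputable def secondMoment (μ : Measure (EuclideanSpace ℝ ι)) : Matrix ι ι ℝ :=
  Matrix.of fun i j => ∫ x, x i * x j ∂μ

theorem integrable_apply_mul_apply (hμ : Integrable (fun x => ‖x‖ ^ 2) μ) (i j : ι) :
    Integrable (fun x : EuclideanSpace ℝ ι => x i * x j) μ := by
  refine hμ.mono (by fun_prop) (ae_of_all _ fun x => ?_)
  rw [norm_mul, norm_pow, norm_norm, sq]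
  exact mul_le_mul (PiLp.norm_apply_le x i) (PiLp.norm_apply_le x j) (norm_nonneg _)
    (norm_nonneg _)

theorem integral_sum_mul_apply_mul_apply (hμ : Integrable (fun x => ‖x‖ ^ 2) μ)
    (a : ι → ι → ℝ) :
    ∫ x, ∑ i, ∑ j, a i j * (x i * x j) ∂μ = ∑ i, ∑ j, a i j * secondMoment μ i j := by
  have hint := integrable_apply_mul_apply hμ
  rw [integral_finsetSum _ fun i _ => integrable_finsetSum _ fun j _ => (hint i j).const_mul _]
  refine Finset.sum_congr rfl fun i _ => ?_
  rw [integral_finsetSum _ fun j _ => (hint i j).const_mul _]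
  exact Finset.sum_congr rfl fun j _ => integral_const_mul _ _

theorem inner_sq_eq_sum (x y : EuclideanSpace ℝ ι) :
    ⟪x, y⟫ ^ 2 = ∑ i, ∑ j, x i * x j * (y i * y j) := by
  simp only [PiLp.inner_apply, RCLike.inner_apply, conj_trivial, sq, Finset.sum_mul_sum]
  exact Finset.sum_congr rfl fun i _ => Finset.sum_congr rfl fun j _ => by ring

theorem integral_inner_sq (hμ : Integrable (fun x => ‖x‖ ^ 2) μ) (x : EuclideanSpace ℝ ι) :
    ∫ y, ⟪x, y⟫ ^ 2 ∂μ = ∑ i, ∑ j, x i * x j * secondMoment μ i j := by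
  simp only [inner_sq_eq_sum x]
  exact integral_sum_mul_apply_mul_apply hμ _

theorem integral_norm_sq_eq_trace (hμ : Integrable (fun x => ‖x‖ ^ 2) μ) :
    ∫ x, ‖x‖ ^ 2 ∂μ = (secondMoment μ).trace := by
  simp_rw [EuclideanSpace.real_norm_sq_eq, sq]
  exact integral_finsetSum _ fun i _ => integrable_apply_mul_apply hμ i i

theorem integral_integral_inner_sq (hμ : Integrable (fun x => ‖x‖ ^ 2) μ) :
    ∫ x, ∫ y, ⟪x, y⟫ ^ 2 ∂μ ∂μ = ∑ i, ∑ j, secondMoment μ i j ^ 2 := by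
  simp_rw [integral_inner_sq hμ, mul_comm _ (secondMoment μ _ _), sq]
  exact integral_sum_mul_apply_mul_apply hμ _

theorem integral_inner_sq_of_secondMoment_eq_smul_one [DecidableEq ι]
    (hμ : Integrable (fun x => ‖x‖ ^ 2) μ) {c : ℝ} (hc : secondMoment μ = c • 1)
    (x : EuclideanSpace ℝ ι) : ∫ y, ⟪x, y⟫ ^ 2 ∂μ = c * ‖x‖ ^ 2 := by
  simp_rw [integral_inner_sq hμ, hc, EuclideanSpace.real_norm_sq_eq, Finset.mul_sum]
  refine Finset.sum_congr rfl fun i _ => ?_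
  simp only [Matrix.smul_apply, Matrix.one_apply, smul_eq_mul, mul_ite, mul_one, mul_zero,
    Finset.sum_ite_eq, Finset.mem_univ, ↓reduceIte]
  ring

theorem secondMoment_apply_self_of_tight {A : ℝ}
    (hA : ∀ x : EuclideanSpace ℝ ι, ∫ y, ⟪x, y⟫ ^ 2 ∂μ = A * ‖x‖ ^ 2) (i : ι) :
    secondMoment μ i i = A := by
  classical
  simpa [secondMoment, EuclideanSpace.inner_single_left, sq] using hA (EuclideanSpace.single i 1)

theorem sum_sq_secondMoment_eq_of_tight (hμ : Integrable (fun x => ‖x‖ ^ 2) μ) {A : ℝ}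
    (hA : ∀ x : EuclideanSpace ℝ ι, ∫ y, ⟪x, y⟫ ^ 2 ∂μ = A * ‖x‖ ^ 2) :
    ∑ i, ∑ j, secondMoment μ i j ^ 2 = (secondMoment μ).trace ^ 2 / Fintype.card ι := by
  rcases isEmpty_or_nonempty ι with hι | hι
  · simp
  have htrace : (secondMoment μ).trace = Fintype.card ι * A := by
    simp [Matrix.trace, secondMoment_apply_self_of_tight hA]
  rw [← integral_integral_inner_sq hμ, integral_congr_ae (ae_of_all _ hA), integral_const_mul,
    integral_norm_sq_eq_trace hμ, htrace]
  field_simp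

end SecondMoment

/-- The probabilistic frame potential of any probability measure on `K ⊆ ℝ^d \ {0}` with
finite second moments is at least `1/d`, with equality iff `μ` is a probabilistic tight
frame. -/
theorem stmt_14 {d : ℕ} (K : Set (EuclideanSpace ℝ (Fin d))) (h0 : (0 : EuclideanSpace ℝ (Fin d)) ∉ K)
    (μ : Measure (EuclideanSpace ℝ (Fin d))) [IsProbabilityMeasure μ]
    (hμK : μ Kᶜ = 0) (hint : Integrable (fun x => ‖x‖ ^ 2) μ) :
    (1 : ℝ) / d ≤ (∫ x, ∫ y, ⟪x, y⟫ ^ 2 ∂μ ∂μ) / (∫ x, ‖x‖ ^ 2 ∂μ) ^ 2 ∧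
      ((∫ x, ∫ y, ⟪x, y⟫ ^ 2 ∂μ ∂μ) / (∫ x, ‖x‖ ^ 2 ∂μ) ^ 2 = 1 / d ↔
        ∃ A : ℝ, 0 < A ∧ ∀ x : EuclideanSpace ℝ (Fin d),
          (∫ y, ⟪x, y⟫ ^ 2 ∂μ) = A * ‖x‖ ^ 2) := by
  have hpos := integral_norm_sq_pos hint (measure_mono_null (by simpa using h0) hμK)
  rw [integral_norm_sq_eq_trace hint] at hpos
  rw [integral_integral_inner_sq hint, integral_norm_sq_eq_trace hint]
  set M := secondMoment μ
  have hd : 0 < d := by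
    rcases Nat.eq_zero_or_pos d with rfl | hd
    · simp [Matrix.trace] at hpos
    · exact hd
  have hcard : (d : ℝ) = Fintype.card (Fin d) := by simp
  have hcard_pos : (0 : ℝ) < Fintype.card (Fin d) := by simpa using hd
  have hinv : (1 : ℝ) / d = M.trace ^ 2 / d / M.trace ^ 2 := by field_simp
  rw [hinv, div_le_div_iff_of_pos_right (by positivity), div_left_inj' (by positivity), hcard,
    M.sum_sq_eq_trace_sq_div_card_iff]
  refine ⟨M.trace_sq_div_card_le_sum_sq, fun hM => ⟨_, div_pos hpos hcard_pos,
    integral_inner_sq_of_secondMoment_eq_smul_one hint hM⟩, fun ⟨_, _, hA⟩ => ?_⟩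
  exact M.sum_sq_eq_trace_sq_div_card_iff.1 (sum_sq_secondMoment_eq_of_tight hint hA)
end
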